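/- Let a : [0,T] → (0,∞) be continuously differentiable and set e_k(s,x) = sqrt(2/a_s) sin(kπx/a_s). Then for j ≠ k, the integral b_{jk}(s) = ∫₀^{a_s} e_j(s,x) ∂_s e_k(s,x) dx equals (-1)^{j+k} · (a'_s/a_s) · 2jk/(j²−k²), and b_{kk}(s) = 0. -/

import Mathlib

open MeasureTheory intervalIntegral Real

lemma hd_cx (c x : ℝ) : HasDerivAt (fun y : ℝ => c * y) c x := by
  simpa using (hasDerivAt_id x).const_mul c

lemma hd_sin_cx (c x : ℝ) : HasDerivAt (fun y => Real.sin (c*y)) (c * Real.cos (c*x)) x := by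
  exact ((Real.hasDerivAt_sin (c*x)).comp x (hd_cx c x)).congr_deriv (by ring)

lemma hd_cos_cx (c x : ℝ) : HasDerivAt (fun y => Real.cos (c*y)) (-(c * Real.sin (c*x))) x := by
  have := (Real.hasDerivAt_cos (c*x)).comp x (hd_cx c x)
  exact this.congr_deriv (by ring)

lemma hd_xsin (c : ℝ) (hc : c ≠ 0) (x : ℝ) :
    HasDerivAt (fun y => Real.sin (c*y)/c^2 - y*Real.cos (c*y)/c) (x*Real.sin (c*x)) x := by
  have h1 := (hd_sin_cx c x).div_const (c^2)
  have h2 := ((hasDerivAt_id x).mul (hd_cos_cx c x)).div_const c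
  have := h1.sub h2
  refine this.congr_deriv ?_
  simp only [id]
  field_simp
  ring

lemma hd_intcos (c : ℝ) (hc : c ≠ 0) (x : ℝ) :
    HasDerivAt (fun y => Real.sin (c*y)/c) (Real.cos (c*x)) x := by
  have := (hd_sin_cx c x).div_const c
  refine this.congr_deriv ?_
  field_simp

lemma hd_sinsq (c : ℝ) (hc : c ≠ 0) (x : ℝ) :
    HasDerivAt (fun y => y/2 - Real.sin (2*c*y)/(4*c)) (Real.sin (c*x)*Real.sin (c*x)) x := by
  have h1 := (hasDerivAt_id x).div_const 2
  have h2 := (hd_sin_cx (2*c) x).div_const (4*c)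
  have := h1.sub h2
  refine this.congr_deriv ?_
  have h3 : Real.cos (2*c*x) = 1 - 2 * Real.sin (c*x)^2 := by
    have h4 : 2*c*x = 2*(c*x) := by ring
    rw [h4, Real.cos_two_mul' (c*x)]
    have := Real.sin_sq_add_cos_sq (c*x)
    nlinarith [this]
  rw [h3]
  field_simp
  ring

lemma hd_sinsin (c1 c2 : ℝ) (hp : c1 - c2 ≠ 0) (hq : c1 + c2 ≠ 0) (x : ℝ) :
    HasDerivAt (fun y => (Real.sin ((c1-c2)*y)/(c1-c2) - Real.sin ((c1+c2)*y)/(c1+c2))/2)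
      (Real.sin (c1*x) * Real.sin (c2*x)) x := by
  have := ((hd_intcos (c1-c2) hp x).sub (hd_intcos (c1+c2) hq x)).div_const 2
  refine this.congr_deriv ?_
  have e1 : (c1-c2)*x = c1*x - c2*x := by ring
  have e2 : (c1+c2)*x = c1*x + c2*x := by ring
  rw [e1, e2, Real.cos_sub, Real.cos_add]
  ring

lemma hd_xsincos_ne (c1 c2 : ℝ) (hp : c1 - c2 ≠ 0) (hq : c1 + c2 ≠ 0) (x : ℝ) :
    HasDerivAt (fun y =>
      ((Real.sin ((c1+c2)*y)/(c1+c2)^2 - y*Real.cos ((c1+c2)*y)/(c1+c2))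
       + (Real.sin ((c1-c2)*y)/(c1-c2)^2 - y*Real.cos ((c1-c2)*y)/(c1-c2)))/2)
      (x * (Real.sin (c1*x) * Real.cos (c2*x))) x := by
  have := ((hd_xsin (c1+c2) hq x).add (hd_xsin (c1-c2) hp x)).div_const 2
  refine this.congr_deriv ?_
  have e1 : (c1-c2)*x = c1*x - c2*x := by ring
  have e2 : (c1+c2)*x = c1*x + c2*x := by ring
  rw [e1, e2, Real.sin_sub, Real.sin_add]
  ring

lemma hd_xsincos_eq (c : ℝ) (hc : c ≠ 0) (x : ℝ) :
    HasDerivAt (fun y => (Real.sin (2*c*y)/(2*c)^2 - y*Real.cos (2*c*y)/(2*c))/2)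
      (x * (Real.sin (c*x) * Real.cos (c*x))) x := by
  have h2c : (2:ℝ)*c ≠ 0 := by positivity
  have := (hd_xsin (2*c) h2c x).div_const 2
  refine this.congr_deriv ?_
  have h4 : 2*c*x = 2*(c*x) := by ring
  rw [h4, Real.sin_two_mul]
  ring

lemma int_comb_ne (A C1 C2 c1 c2 : ℝ) (hp : c1 - c2 ≠ 0) (hq : c1 + c2 ≠ 0) :
    ∫ x in (0:ℝ)..A, (C1 * (Real.sin (c1*x)*Real.sin (c2*x))
        + C2 * (x*(Real.sin (c1*x)*Real.cos (c2*x))))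
    = C1 * ((Real.sin ((c1-c2)*A)/(c1-c2) - Real.sin ((c1+c2)*A)/(c1+c2))/2)
    + C2 * (((Real.sin ((c1+c2)*A)/(c1+c2)^2 - A*Real.cos ((c1+c2)*A)/(c1+c2))
       + (Real.sin ((c1-c2)*A)/(c1-c2)^2 - A*Real.cos ((c1-c2)*A)/(c1-c2)))/2) := by
  have h := intervalIntegral.integral_eq_sub_of_hasDerivAt
    (f := fun y => C1 * ((Real.sin ((c1-c2)*y)/(c1-c2) - Real.sin ((c1+c2)*y)/(c1+c2))/2)
      + C2 * (((Real.sin ((c1+c2)*y)/(c1+c2)^2 - y*Real.cos ((c1+c2)*y)/(c1+c2))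
       + (Real.sin ((c1-c2)*y)/(c1-c2)^2 - y*Real.cos ((c1-c2)*y)/(c1-c2)))/2))
    (f' := fun x => C1 * (Real.sin (c1*x)*Real.sin (c2*x))
        + C2 * (x*(Real.sin (c1*x)*Real.cos (c2*x))))
    (a := 0) (b := A)
    (fun x _ => ((hd_sinsin c1 c2 hp hq x).const_mul C1).add
      ((hd_xsincos_ne c1 c2 hp hq x).const_mul C2))
    (by apply Continuous.intervalIntegrable; fun_prop)
  rw [h]
  simp

lemma int_comb_eq (A C1 C2 c : ℝ) (hc : c ≠ 0) :
    ∫ x in (0:ℝ)..A, (C1 * (Real.sin (c*x)*Real.sin (c*x))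
        + C2 * (x*(Real.sin (c*x)*Real.cos (c*x))))
    = C1 * (A/2 - Real.sin (2*c*A)/(4*c))
    + C2 * ((Real.sin (2*c*A)/(2*c)^2 - A*Real.cos (2*c*A)/(2*c))/2) := by
  have h := intervalIntegral.integral_eq_sub_of_hasDerivAt
    (f := fun y => C1 * (y/2 - Real.sin (2*c*y)/(4*c))
      + C2 * ((Real.sin (2*c*y)/(2*c)^2 - y*Real.cos (2*c*y)/(2*c))/2))
    (f' := fun x => C1 * (Real.sin (c*x)*Real.sin (c*x))
        + C2 * (x*(Real.sin (c*x)*Real.cos (c*x))))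
    (a := 0) (b := A)
    (fun x _ => ((hd_sinsq c hc x).const_mul C1).add
      ((hd_xsincos_eq c hc x).const_mul C2))
    (by apply Continuous.intervalIntegrable; fun_prop)
  rw [h]
  simp

lemma cos_nat (n : ℕ) : Real.cos (n*Real.pi) = (-1:ℝ)^n := by
  simpa using Real.cos_nat_mul_pi_sub 0 n

/-- Let `a : [0,T] → (0,∞)` be C¹ and `e_k(s,x) = √(2/a_s) sin(kπx/a_s)`. Then
`b_{jk}(s) = ∫₀^{a_s} e_j(s,x) ∂_s e_k(s,x) dx` equals
`(-1)^{j+k} (a'_s/a_s) · 2jk/(j²−k²)` for `j ≠ k`, and `b_{kk}(s) = 0`. -/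

theorem stmt_2 (T : ℝ) (hT : 0 < T) (a a' : ℝ → ℝ)
    (ha : ∀ t ∈ Set.Icc (0:ℝ) T, HasDerivAt a (a' t) t)
    (hapos : ∀ t ∈ Set.Icc (0:ℝ) T, 0 < a t)
    (e : ℕ → ℝ → ℝ → ℝ)
    (he : ∀ k s x, e k s x = Real.sqrt (2 / a s) * Real.sin (k * Real.pi * x / a s))
    (s : ℝ) (hs : s ∈ Set.Icc (0:ℝ) T) (j k : ℕ) (hj : 1 ≤ j) (hk : 1 ≤ k) :
    (j ≠ k →
      ∫ x in (0:ℝ)..(a s), e j s x * deriv (fun t => e k t x) s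
        = (-1 : ℝ) ^ (j + k) * (a' s / a s) * (2 * j * k / ((j : ℝ) ^ 2 - (k : ℝ) ^ 2))) ∧
    (∫ x in (0:ℝ)..(a s), e k s x * deriv (fun t => e k t x) s = 0) := by
  have hA : 0 < a s := hapos s hs
  have hA0 : a s ≠ 0 := ne_of_gt hA
  set A := a s with hAdef
  set A' := a' s with hA'def
  set S := Real.sqrt (2/A) with hSdef
  have hSpos : 0 < S := Real.sqrt_pos.mpr (by positivity)
  have hS0 : S ≠ 0 := ne_of_gt hSpos
  have hS2 : S^2 = 2/A := Real.sq_sqrt (by positivity)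
  set M := -A'/A^2 with hMdef
  set D1 := 1/(2*S) * (2*M) with hD1def
  -- derivative in t
  have h1 : HasDerivAt a A' s := ha s hs
  have hinv : HasDerivAt (fun t => (a t)⁻¹) (-A'/A^2) s := h1.inv hA0
  have h2 : HasDerivAt (fun t => 2/(a t)) (2*M) s := by
    simpa [div_eq_mul_inv, hMdef] using hinv.const_mul 2
  have hsqrt : HasDerivAt (fun t => Real.sqrt (2/a t)) D1 s := by
    have h2A : (2:ℝ)/A ≠ 0 := by positivity
    exact (Real.hasDerivAt_sqrt h2A).comp s h2
  have hderiv : ∀ (n : ℕ) (x : ℝ), deriv (fun t => e n t x) s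
      = D1 * Real.sin ((n:ℝ)*Real.pi*x/A)
        + S * (Real.cos ((n:ℝ)*Real.pi*x/A) * (((n:ℝ)*Real.pi*x) * M)) := by
    intro n x
    have h3 : HasDerivAt (fun t => (n:ℝ)*Real.pi*x/(a t)) (((n:ℝ)*Real.pi*x) * M) s := by
      have := hinv.const_mul ((n:ℝ)*Real.pi*x)
      simpa [div_eq_mul_inv, hMdef] using this
    have hsin : HasDerivAt (fun t => Real.sin ((n:ℝ)*Real.pi*x/a t))
        (Real.cos ((n:ℝ)*Real.pi*x/A) * (((n:ℝ)*Real.pi*x) * M)) s := by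
      exact (Real.hasDerivAt_sin ((n:ℝ)*Real.pi*x/A)).comp s h3
    have hfun : (fun t => e n t x) = fun t => Real.sqrt (2/a t) * Real.sin ((n:ℝ)*Real.pi*x/a t) :=
      funext fun t => he n t x
    rw [hfun]
    exact (hsqrt.mul hsin).deriv
  have harg : ∀ (n : ℕ) (x : ℝ), (n:ℝ)*Real.pi*x/A = ((n:ℝ)*Real.pi/A)*x := by
    intro n x; ring
  have hpi := Real.pi_ne_zero
  have hpipos := Real.pi_pos
  -- pointwise integrand identity
  have key : ∀ (m n : ℕ) (x : ℝ),
      e m s x * deriv (fun t => e n t x) s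
      = M * (Real.sin (((m:ℝ)*Real.pi/A)*x) * Real.sin (((n:ℝ)*Real.pi/A)*x))
        + (S^2*((n:ℝ)*Real.pi*M)) * (x * (Real.sin (((m:ℝ)*Real.pi/A)*x)
            * Real.cos (((n:ℝ)*Real.pi/A)*x))) := by
    intro m n x
    rw [he m s x, hderiv n x, ← hAdef, harg m x, harg n x, hD1def, ← hSdef]
    field_simp
  constructor
  · intro hjk
    have hjkR : (j:ℝ) ≠ (k:ℝ) := fun h => hjk (Nat.cast_injective h)
    set c1 := (j:ℝ)*Real.pi/A with hc1
    set c2 := (k:ℝ)*Real.pi/A with hc2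
    have hp : c1 - c2 ≠ 0 := by
      rw [hc1, hc2]
      have : (j:ℝ)*Real.pi/A - (k:ℝ)*Real.pi/A = ((j:ℝ)-(k:ℝ))*(Real.pi/A) := by ring
      rw [this]
      apply mul_ne_zero (sub_ne_zero.mpr hjkR) (by positivity)
    have hq : c1 + c2 ≠ 0 := by
      rw [hc1, hc2]
      have hjpos : (0:ℝ) < j := by exact_mod_cast hj
      have hkpos : (0:ℝ) < k := by exact_mod_cast hk
      positivity
    have hcongr : ∫ x in (0:ℝ)..A, e j s x * deriv (fun t => e k t x) s
        = ∫ x in (0:ℝ)..A, (M * (Real.sin (c1*x)*Real.sin (c2*x))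
            + (S^2*((k:ℝ)*Real.pi*M)) * (x*(Real.sin (c1*x)*Real.cos (c2*x)))) := by
      apply intervalIntegral.integral_congr
      intro x _
      exact key j k x
    rw [hcongr, int_comb_ne A M (S^2*((k:ℝ)*Real.pi*M)) c1 c2 hp hq]
    have e1 : (c1-c2)*A = (j:ℝ)*Real.pi - (k:ℝ)*Real.pi := by
      rw [hc1, hc2]; field_simp
    have e2 : (c1+c2)*A = ((j+k:ℕ):ℝ)*Real.pi := by
      rw [hc1, hc2]; push_cast; field_simp
    have hsinp : Real.sin ((c1-c2)*A) = 0 := by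
      rw [e1, Real.sin_sub, Real.sin_nat_mul_pi, Real.sin_nat_mul_pi]; ring
    have hsinq : Real.sin ((c1+c2)*A) = 0 := by
      rw [e2, Real.sin_nat_mul_pi]
    have hcosp : Real.cos ((c1-c2)*A) = (-1:ℝ)^j * (-1:ℝ)^k := by
      rw [e1, Real.cos_sub, Real.sin_nat_mul_pi, Real.sin_nat_mul_pi, cos_nat, cos_nat]; ring
    have hcosq : Real.cos ((c1+c2)*A) = (-1:ℝ)^(j+k) := by
      rw [e2, cos_nat]
    rw [hsinp, hsinq, hcosp, hcosq, hS2, hc1, hc2, hMdef, hAdef, hA'def]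
    have hd1 : (j:ℝ)*Real.pi/(a s) - (k:ℝ)*Real.pi/(a s) = ((j:ℝ)-(k:ℝ))*Real.pi/(a s) := by ring
    have hd2 : (j:ℝ)*Real.pi/(a s) + (k:ℝ)*Real.pi/(a s) = ((j:ℝ)+(k:ℝ))*Real.pi/(a s) := by ring
    have hjk1 : (j:ℝ)-(k:ℝ) ≠ 0 := sub_ne_zero.mpr hjkR
    have hjk2 : (j:ℝ)+(k:ℝ) ≠ 0 := by
      have hjpos : (0:ℝ) < j := by exact_mod_cast hj
      have hkpos : (0:ℝ) < k := by exact_mod_cast hk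
      positivity
    have hsq : (j:ℝ)^2 - (k:ℝ)^2 ≠ 0 := by
      have : (j:ℝ)^2-(k:ℝ)^2 = ((j:ℝ)-(k:ℝ))*((j:ℝ)+(k:ℝ)) := by ring
      rw [this]; exact mul_ne_zero hjk1 hjk2
    have hpow : (-1:ℝ)^(j+k) = (-1:ℝ)^j * (-1:ℝ)^k := pow_add (-1) j k
    rw [hd1, hd2, hpow]
    field_simp
    ring
  · set c := (k:ℝ)*Real.pi/A with hc
    have hkpos : (0:ℝ) < k := by exact_mod_cast hk
    have hcne : c ≠ 0 := by rw [hc]; positivity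
    have hcongr : ∫ x in (0:ℝ)..A, e k s x * deriv (fun t => e k t x) s
        = ∫ x in (0:ℝ)..A, (M * (Real.sin (c*x)*Real.sin (c*x))
            + (S^2*((k:ℝ)*Real.pi*M)) * (x*(Real.sin (c*x)*Real.cos (c*x)))) := by
      apply intervalIntegral.integral_congr
      intro x _
      exact key k k x
    rw [hcongr, int_comb_eq A M (S^2*((k:ℝ)*Real.pi*M)) c hcne]
    have e2 : 2*c*A = ((2*k:ℕ):ℝ)*Real.pi := by
      rw [hc]; push_cast; field_simp
    have hsin2 : Real.sin (2*c*A) = 0 := by rw [e2, Real.sin_nat_mul_pi]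
    have hcos2 : Real.cos (2*c*A) = 1 := by
      rw [e2, cos_nat, pow_mul]; norm_num
    rw [hsin2, hcos2, hS2, hc, hMdef]
    field_simp
    ring
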